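/- Proposition 3 (δISS of deep GRUs): consider the deep GRU with M layers, fix λ̌^i ≥ 1 for each layer i ∈ {1,…,M} and set λ̌^0 = 1. Define, for each layer i, σ̌_z^i = σ(‖[λ̌^{i−1}W_z^i λ̌^iU_z^i b_z^i]‖_∞), σ̌_f^i = σ(‖[λ̌^{i−1}W_f^i λ̌^iU_f^i b_f^i]‖_∞), φ̌_r^i = tanh(‖[λ̌^{i−1}W_r^i λ̌^iU_r^i b_r^i]‖_∞), and suppose that for every layer i, ‖U_r^i‖_∞ ( (1/4) λ̌^i ‖U_f^i‖_∞ + σ̌_f^i ) < 1 − (1/4) ((λ̌^i + φ̌_r^i)/(1 − σ̌_z^i)) ‖U_z^i‖_∞. Then the deep GRU is Incrementally Input-to-State Stable: there exist a class-KL function β_Δ and a class-K∞ function γ_Δu such that for every pair of initial states x̄_a, x̄_b with ‖x̄_a^i‖_∞ ≤ λ̌^i and ‖x̄_b^i‖_∞ ≤ λ̌^i for all i, every pair of input sequences u_a, u_b with ‖u_a(t)‖_∞ ≤ 1 and ‖u_b(t)‖_∞ ≤ 1 for all t, and every k ≥ 0, the concatenated state trajectories satisfy ‖x_a(k) − x_b(k)‖_∞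 ≤ β_Δ(‖x̄_a − x̄_b‖_∞, k) + γ_Δu(sup_t ‖u_a(t) − u_b(t)‖_∞). -/

import Mathlib

open Real Filter

/-- The sigmoid activation function. -/
noncomputable def sigmoid (s : ℝ) : ℝ := 1 / (1 + Real.exp (-s))

/-- Induced infinity norm of a matrix (maximum absolute row sum). -/
noncomputable def matNorm {n m : ℕ} (A : Matrix (Fin n) (Fin m) ℝ) : ℝ :=
  ⨆ i, ∑ j, |A i j|

/-- Infinity norm of the horizontal concatenation `[A B c]`
(maximum absolute row sum of the concatenated matrix). -/
noncomputable def catNorm {n m p : ℕ} (A : Matrix (Fin n) (Fin m) ℝ)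
    (B : Matrix (Fin n) (Fin p) ℝ) (c : Fin n → ℝ) : ℝ :=
  ⨆ i, (∑ j, |A i j| + ∑ j, |B i j| + |c i|)

/-- One step of the single-layer GRU:
`x⁺ = z ∘ x + (1 - z) ∘ tanh(W_r u + U_r (f ∘ x) + b_r)`,
`z = σ(W_z u + U_z x + b_z)`, `f = σ(W_f u + U_f x + b_f)`. -/
noncomputable def gruStep {nu nx : ℕ}
    (Wz Wf Wr : Matrix (Fin nx) (Fin nu) ℝ)
    (Uz Uf Ur : Matrix (Fin nx) (Fin nx) ℝ)
    (bz bf br : Fin nx → ℝ)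
    (u : Fin nu → ℝ) (x : Fin nx → ℝ) : Fin nx → ℝ :=
  let z : Fin nx → ℝ := fun i => _root_.sigmoid ((Wz.mulVec u + Uz.mulVec x + bz) i)
  let f : Fin nx → ℝ := fun i => _root_.sigmoid ((Wf.mulVec u + Uf.mulVec x + bf) i)
  let r : Fin nx → ℝ := fun i => Real.tanh ((Wr.mulVec u + Ur.mulVec (f * x) + br) i)
  fun j => z j * x j + (1 - z j) * r j

/-- A function `γ : [0,∞) → [0,∞)` is of class K∞ if it is continuous,
strictly increasing, unbounded and `γ 0 = 0`. -/
def IsKInf (γ : ℝ → ℝ) : Prop :=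
  ContinuousOn γ (Set.Ici 0) ∧ StrictMonoOn γ (Set.Ici 0) ∧ γ 0 = 0 ∧
    ∀ M : ℝ, ∃ s, 0 ≤ s ∧ M < γ s

/-- A function `β : [0,∞) × ℕ → [0,∞)` is of class KL if `β (·, k)` is of class K∞
for each `k`, `β (s, ·)` is nonincreasing, and `β (s, k) → 0` as `k → ∞`. -/
def IsKL (β : ℝ → ℕ → ℝ) : Prop :=
  (∀ k : ℕ, IsKInf fun s => β s k) ∧
    (∀ s : ℝ, 0 ≤ s → ∀ k l : ℕ, k ≤ l → β s l ≤ β s k) ∧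
    (∀ s : ℝ, 0 ≤ s → Filter.Tendsto (fun k : ℕ => β s k) Filter.atTop (nhds 0))

/-- Input dimension of layer `i` of a deep GRU: the first layer is fed by the
external input (dimension `nu`), layer `i+1` is fed by the state of layer `i`. -/
def inDim (nu : ℕ) (n : ℕ → ℕ) : ℕ → ℕ
  | 0 => nu
  | i + 1 => n i

/-- Bound on the input of layer `i`: the external input is unity bounded (`λ̌⁰ = 1`),
and layer `i+1` is fed by the state of layer `i`, bounded by `λ̌^i`. -/
noncomputable def lamIn (lam : ℕ → ℝ) : ℕ → ℝ
  | 0 => 1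
  | i + 1 => lam i

/-!
On the box `‖x^i‖_∞ ≤ λ̌^i`, which every layer leaves invariant, each layer is an incremental
contraction: the gates are `1/4`-Lipschitz and `tanh` is `1`-Lipschitz, so
`‖Δx^i(k+1)‖ ≤ a_i ‖Δx^i(k)‖ + b_i ‖Δu^i(k)‖` with
`a_i = σ̌_z + (1 - σ̌_z) ‖U_r‖ (λ̌^i ‖U_f‖ / 4 + σ̌_f) + (λ̌^i + φ̌_r) ‖U_z‖ / 4`,
and the hypothesis of the proposition says exactly `a_i < 1`.
The layers form a cascade, layer `i` being driven by the new state of layer `i - 1`. Fix a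
common rate `r` with `max a_i < r < 1` and `c ≥ 0` with `b_i ≤ c (r - a_i)`; induction over the
layers gives `‖Δx^i(k)‖ ≤ (1 + c)^(i+1) (r^k ‖Δx̄‖ + sup_t ‖Δu(t)‖)`.
-/

open Matrix

theorem sigmoid_eq_real_sigmoid : _root_.sigmoid = Real.sigmoid := by
  funext s
  rw [_root_.sigmoid, Real.sigmoid_def, one_div]

theorem abs_sigmoid_sub_le (a b : ℝ) : |_root_.sigmoid a - _root_.sigmoid b| ≤ 1 / 4 * |a - b| := by
  have hderiv : ∀ x ∈ Set.univ, ‖deriv Real.sigmoid x‖ ≤ 1 / 4 := fun x _ => by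
    rw [Real.deriv_sigmoid, Real.norm_eq_abs, abs_of_nonneg (mul_nonneg
      (Real.sigmoid_nonneg x) (sub_nonneg.2 (Real.sigmoid_le_one x)))]
    nlinarith [sq_nonneg (Real.sigmoid x - 1 / 2)]
  simpa only [sigmoid_eq_real_sigmoid, Real.norm_eq_abs] using
    convex_univ.norm_image_sub_le_of_norm_deriv_le (fun x _ => differentiableAt_sigmoid) hderiv
      (Set.mem_univ b) (Set.mem_univ a)

theorem sigmoid_mem_Ioo (s : ℝ) : _root_.sigmoid s ∈ Set.Ioo 0 1 := by
  rw [sigmoid_eq_real_sigmoid]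
  exact ⟨Real.sigmoid_pos s, Real.sigmoid_lt_one s⟩

theorem Real.tanh_eq_two_mul_sigmoid_sub_one (x : ℝ) : tanh x = 2 * Real.sigmoid (2 * x) - 1 := by
  rw [tanh_eq_sinh_div_cosh, sinh_eq, cosh_eq, Real.sigmoid_def,
    show -(2 * x) = -x + -x by ring, exp_add]
  have hx : exp x * exp (-x) = 1 := by rw [← exp_add, add_neg_cancel, exp_zero]
  field_simp
  linear_combination 2 * exp (-x) * hx

theorem Real.tanh_monotone : Monotone tanh := fun a b hab => by
  simp only [tanh_eq_two_mul_sigmoid_sub_one]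
  linarith [Real.sigmoid_monotone (by linarith : 2 * a ≤ 2 * b)]

theorem Real.abs_tanh_sub_le (a b : ℝ) : |tanh a - tanh b| ≤ |a - b| := by
  have h := abs_sigmoid_sub_le (2 * a) (2 * b)
  rw [sigmoid_eq_real_sigmoid, ← mul_sub, abs_mul, abs_two] at h
  rw [tanh_eq_two_mul_sigmoid_sub_one, tanh_eq_two_mul_sigmoid_sub_one,
    show ∀ p q : ℝ, 2 * p - 1 - (2 * q - 1) = 2 * (p - q) by intros; ring, abs_mul, abs_two]
  linarith

theorem Real.abs_tanh_le_tanh {s c : ℝ} (h : |s| ≤ c) : |tanh s| ≤ tanh c := by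
  rw [abs_le, ← tanh_neg]
  exact ⟨tanh_monotone (abs_le.1 h).1, tanh_monotone (abs_le.1 h).2⟩

section MatrixNorms

variable {m n p : ℕ}

theorem sum_abs_le_matNorm (A : Matrix (Fin m) (Fin n) ℝ) (i : Fin m) :
    ∑ j, |A i j| ≤ matNorm A :=
  le_ciSup (f := fun i => ∑ j, |A i j|) (Set.finite_range _).bddAbove i

theorem matNorm_nonneg (A : Matrix (Fin m) (Fin n) ℝ) : 0 ≤ matNorm A :=
  Real.iSup_nonneg fun _ => Finset.sum_nonneg fun _ _ => abs_nonneg _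

theorem le_catNorm (A : Matrix (Fin m) (Fin n) ℝ) (B : Matrix (Fin m) (Fin p) ℝ)
    (c : Fin m → ℝ) (i : Fin m) : ∑ j, |A i j| + ∑ j, |B i j| + |c i| ≤ catNorm A B c :=
  le_ciSup (f := fun i => ∑ j, |A i j| + ∑ j, |B i j| + |c i|) (Set.finite_range _).bddAbove i

theorem catNorm_nonneg (A : Matrix (Fin m) (Fin n) ℝ) (B : Matrix (Fin m) (Fin p) ℝ)
    (c : Fin m → ℝ) : 0 ≤ catNorm A B c :=
  Real.iSup_nonneg fun _ => by positivity

theorem abs_mulVec_apply_le (A : Matrix (Fin m) (Fin n) ℝ) (x : Fin n → ℝ) (i : Fin m) :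
    |(A *ᵥ x) i| ≤ (∑ j, |A i j|) * ‖x‖ := by
  rw [Matrix.mulVec, dotProduct, Finset.sum_mul]
  refine (Finset.abs_sum_le_sum_abs _ _).trans (Finset.sum_le_sum fun j _ => ?_)
  rw [abs_mul, ← Real.norm_eq_abs (x j)]
  exact mul_le_mul_of_nonneg_left (norm_le_pi_norm x j) (abs_nonneg _)

theorem abs_mulVec_apply_le_matNorm (A : Matrix (Fin m) (Fin n) ℝ) (x : Fin n → ℝ)
    (i : Fin m) : |(A *ᵥ x) i| ≤ matNorm A * ‖x‖ :=
  (abs_mulVec_apply_le A x i).trans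
    (mul_le_mul_of_nonneg_right (sum_abs_le_matNorm A i) (norm_nonneg x))

theorem abs_mulVec_apply_le_sum_abs_smul {μ : ℝ} (A : Matrix (Fin m) (Fin n) ℝ)
    {x : Fin n → ℝ} (hx : ‖x‖ ≤ μ) (i : Fin m) : |(A *ᵥ x) i| ≤ ∑ j, |(μ • A) i j| := by
  have hμ : 0 ≤ μ := (norm_nonneg x).trans hx
  simp only [Matrix.smul_apply, smul_eq_mul, abs_mul, abs_of_nonneg hμ, ← Finset.mul_sum]
  exact (abs_mulVec_apply_le A x i).trans (by rw [mul_comm]; gcongr)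

theorem abs_affine_apply_le_catNorm {μ lam : ℝ} (W : Matrix (Fin m) (Fin n) ℝ)
    (U : Matrix (Fin m) (Fin p) ℝ) (b : Fin m → ℝ) {u : Fin n → ℝ} {x : Fin p → ℝ}
    (hu : ‖u‖ ≤ μ) (hx : ‖x‖ ≤ lam) (i : Fin m) :
    |(W *ᵥ u + U *ᵥ x + b) i| ≤ catNorm (μ • W) (lam • U) b := by
  refine le_trans ?_ (le_catNorm _ _ b i)
  simp only [Pi.add_apply]
  grw [abs_add_le, abs_add_le, abs_mulVec_apply_le_sum_abs_smul W hu,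
    abs_mulVec_apply_le_sum_abs_smul U hx]

theorem abs_affine_apply_sub_le (W : Matrix (Fin m) (Fin n) ℝ) (U : Matrix (Fin m) (Fin p) ℝ)
    (b : Fin m → ℝ) (u u' : Fin n → ℝ) (x x' : Fin p → ℝ) (i : Fin m) :
    |(W *ᵥ u + U *ᵥ x + b) i - (W *ᵥ u' + U *ᵥ x' + b) i| ≤
      matNorm W * ‖u - u'‖ + matNorm U * ‖x - x'‖ := by
  have h : (W *ᵥ u + U *ᵥ x + b) i - (W *ᵥ u' + U *ᵥ x' + b) i =
      (W *ᵥ (u - u')) i + (U *ᵥ (x - x')) i := by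
    simp only [Matrix.mulVec_sub, Pi.add_apply, Pi.sub_apply]; ring
  rw [h]
  grw [abs_add_le, abs_mulVec_apply_le_matNorm, abs_mulVec_apply_le_matNorm]

end MatrixNorms

theorem sigmoid_affine_apply_le_sigmoid_catNorm {m n p : ℕ} {μ lam : ℝ}
    (W : Matrix (Fin m) (Fin n) ℝ) (U : Matrix (Fin m) (Fin p) ℝ) (b : Fin m → ℝ)
    {u : Fin n → ℝ} {x : Fin p → ℝ} (hu : ‖u‖ ≤ μ) (hx : ‖x‖ ≤ lam) (i : Fin m) :
    _root_.sigmoid ((W *ᵥ u + U *ᵥ x + b) i) ≤ _root_.sigmoid (catNorm (μ • W) (lam • U) b) := by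
  rw [sigmoid_eq_real_sigmoid]
  exact Real.sigmoid_le ((le_abs_self _).trans (abs_affine_apply_le_catNorm W U b hu hx i))

theorem abs_sigmoid_affine_apply_sub_le {m n p : ℕ} (W : Matrix (Fin m) (Fin n) ℝ)
    (U : Matrix (Fin m) (Fin p) ℝ) (b : Fin m → ℝ) (u u' : Fin n → ℝ) (x x' : Fin p → ℝ)
    (i : Fin m) :
    |_root_.sigmoid ((W *ᵥ u + U *ᵥ x + b) i) - _root_.sigmoid ((W *ᵥ u' + U *ᵥ x' + b) i)| ≤
      1 / 4 * (matNorm W * ‖u - u'‖ + matNorm U * ‖x - x'‖) :=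
  (abs_sigmoid_sub_le _ _).trans (by grw [abs_affine_apply_sub_le])

theorem norm_mul_sub_mul_le {n : ℕ} {f g x y : Fin n → ℝ} {s ε lam : ℝ} (hs : 0 ≤ s)
    (hε : 0 ≤ ε) (hf : ∀ i, |f i| ≤ s) (hfg : ∀ i, |f i - g i| ≤ ε) (hy : ‖y‖ ≤ lam) :
    ‖f * x - g * y‖ ≤ s * ‖x - y‖ + ε * lam := by
  have hlam : 0 ≤ lam := (norm_nonneg y).trans hy
  refine (pi_norm_le_iff_of_nonneg (by positivity)).2 fun i => ?_
  have hxy : |x i - y i| ≤ ‖x - y‖ := norm_le_pi_norm (x - y) i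
  have hyi : |y i| ≤ lam := (norm_le_pi_norm y i).trans hy
  rw [Real.norm_eq_abs, Pi.sub_apply, Pi.mul_apply, Pi.mul_apply,
    show f i * x i - g i * y i = f i * (x i - y i) + (f i - g i) * y i by ring]
  grw [abs_add_le, abs_mul, abs_mul, hf i, hfg i, hxy, hyi]

theorem abs_convex_comb_le {z a b c : ℝ} (hz0 : 0 ≤ z) (hz1 : z ≤ 1) (ha : |a| ≤ c)
    (hb : |b| ≤ c) : |z * a + (1 - z) * b| ≤ c := by
  have hz1' : 0 ≤ 1 - z := sub_nonneg.2 hz1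
  grw [abs_add_le, abs_mul, abs_mul, abs_of_nonneg hz0, abs_of_nonneg hz1', ha, hb]
  linarith

theorem abs_convex_comb_sub_le {za zb a a' b b' : ℝ} (hz0 : 0 ≤ za) (hz1 : za ≤ 1) :
    |za * a + (1 - za) * b - (zb * a' + (1 - zb) * b')| ≤
      za * |a - a'| + (1 - za) * |b - b'| + |za - zb| * (|a'| + |b'|) := by
  rw [show za * a + (1 - za) * b - (zb * a' + (1 - zb) * b') =
    za * (a - a') + (1 - za) * (b - b') + (za - zb) * (a' - b') by ring]
  grw [abs_add_le, abs_add_le, abs_mul, abs_mul, abs_mul, abs_of_nonneg hz0,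
    abs_of_nonneg (sub_nonneg.2 hz1), abs_sub a' b']

structure GRULayer (nu nx : ℕ) where
  (Wz Wf Wr : Matrix (Fin nx) (Fin nu) ℝ)
  (Uz Uf Ur : Matrix (Fin nx) (Fin nx) ℝ)
  (bz bf br : Fin nx → ℝ)

namespace GRULayer

variable {nu nx : ℕ} (L : GRULayer nu nx)

noncomputable def step (u : Fin nu → ℝ) (x : Fin nx → ℝ) : Fin nx → ℝ :=
  gruStep L.Wz L.Wf L.Wr L.Uz L.Uf L.Ur L.bz L.bf L.br u x

noncomputable def updateGate (u : Fin nu → ℝ) (x : Fin nx → ℝ) : Fin nx → ℝ :=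
  fun j => _root_.sigmoid ((L.Wz *ᵥ u + L.Uz *ᵥ x + L.bz) j)

noncomputable def forgetGate (u : Fin nu → ℝ) (x : Fin nx → ℝ) : Fin nx → ℝ :=
  fun j => _root_.sigmoid ((L.Wf *ᵥ u + L.Uf *ᵥ x + L.bf) j)

noncomputable def candidate (u : Fin nu → ℝ) (x : Fin nx → ℝ) : Fin nx → ℝ :=
  fun j => tanh ((L.Wr *ᵥ u + L.Ur *ᵥ (L.forgetGate u x * x) + L.br) j)

theorem step_apply (u : Fin nu → ℝ) (x : Fin nx → ℝ) (j : Fin nx) :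
    L.step u x j = L.updateGate u x j * x j + (1 - L.updateGate u x j) * L.candidate u x j :=
  rfl

-- `σ̌_z`, `σ̌_f` and `φ̌_r` of the paper, for layer inputs bounded by `μ` and states by `lam`.
noncomputable def zBound (μ lam : ℝ) : ℝ := _root_.sigmoid (catNorm (μ • L.Wz) (lam • L.Uz) L.bz)

noncomputable def fBound (μ lam : ℝ) : ℝ := _root_.sigmoid (catNorm (μ • L.Wf) (lam • L.Uf) L.bf)

noncomputable def rBound (μ lam : ℝ) : ℝ := tanh (catNorm (μ • L.Wr) (lam • L.Ur) L.br)

noncomputable def candidateStateLip (μ lam : ℝ) : ℝ :=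
  matNorm L.Ur * (1 / 4 * lam * matNorm L.Uf + L.fBound μ lam)

noncomputable def candidateInputLip (lam : ℝ) : ℝ :=
  matNorm L.Wr + 1 / 4 * lam * matNorm L.Ur * matNorm L.Wf

def DeltaISSCondition (μ lam : ℝ) : Prop :=
  L.candidateStateLip μ lam <
    1 - 1 / 4 * ((lam + L.rBound μ lam) / (1 - L.zBound μ lam)) * matNorm L.Uz

noncomputable def contraction (μ lam : ℝ) : ℝ :=
  L.zBound μ lam + (1 - L.zBound μ lam) * L.candidateStateLip μ lam +
    1 / 4 * (lam + L.rBound μ lam) * matNorm L.Uz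

noncomputable def inputGain (μ lam : ℝ) : ℝ :=
  L.candidateInputLip lam + 1 / 4 * (lam + L.rBound μ lam) * matNorm L.Wz

theorem updateGate_mem_Icc (u : Fin nu → ℝ) (x : Fin nx → ℝ) (j : Fin nx) :
    L.updateGate u x j ∈ Set.Icc 0 1 :=
  Set.Ioo_subset_Icc_self (sigmoid_mem_Ioo _)

theorem forgetGate_mem_Icc (u : Fin nu → ℝ) (x : Fin nx → ℝ) (j : Fin nx) :
    L.forgetGate u x j ∈ Set.Icc 0 1 :=
  Set.Ioo_subset_Icc_self (sigmoid_mem_Ioo _)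

theorem rBound_nonneg (μ lam : ℝ) : 0 ≤ L.rBound μ lam := by
  simpa only [rBound, tanh_zero] using tanh_monotone (catNorm_nonneg _ _ _)

theorem norm_step_le {lam : ℝ} (hlam : 1 ≤ lam) (u : Fin nu → ℝ) {x : Fin nx → ℝ}
    (hx : ‖x‖ ≤ lam) : ‖L.step u x‖ ≤ lam := by
  refine (pi_norm_le_iff_of_nonneg (by linarith)).2 fun j => ?_
  obtain ⟨hz0, hz1⟩ := L.updateGate_mem_Icc u x j
  rw [Real.norm_eq_abs, step_apply]
  exact abs_convex_comb_le hz0 hz1 ((norm_le_pi_norm x j).trans hx)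
    ((abs_tanh_lt_one _).le.trans hlam)

variable {μ lam : ℝ} {ua ub : Fin nu → ℝ} {xa xb : Fin nx → ℝ}

theorem candidateStateLip_nonneg (hlam : 0 ≤ lam) : 0 ≤ L.candidateStateLip μ lam := by
  have := matNorm_nonneg L.Uf
  have := (sigmoid_mem_Ioo (catNorm (μ • L.Wf) (lam • L.Uf) L.bf)).1
  exact mul_nonneg (matNorm_nonneg L.Ur) (by unfold fBound; positivity)

theorem candidateInputLip_nonneg (hlam : 0 ≤ lam) : 0 ≤ L.candidateInputLip lam := by
  have := matNorm_nonneg L.Wr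
  have := matNorm_nonneg L.Ur
  have := matNorm_nonneg L.Wf
  unfold candidateInputLip
  positivity

theorem contraction_nonneg (hlam : 0 ≤ lam) : 0 ≤ L.contraction μ lam := by
  obtain ⟨hz0, hz1⟩ := sigmoid_mem_Ioo (catNorm (μ • L.Wz) (lam • L.Uz) L.bz)
  have := sub_pos.2 hz1
  have := matNorm_nonneg L.Uz
  have := L.rBound_nonneg μ lam
  have := L.candidateStateLip_nonneg (μ := μ) hlam
  unfold contraction zBound
  positivity

theorem inputGain_nonneg (hlam : 0 ≤ lam) : 0 ≤ L.inputGain μ lam := by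
  have := L.candidateInputLip_nonneg hlam
  have := matNorm_nonneg L.Wz
  have := L.rBound_nonneg μ lam
  unfold inputGain
  positivity

theorem norm_forgetGate_mul_sub_le (hua : ‖ua‖ ≤ μ) (hxa : ‖xa‖ ≤ lam) (hxb : ‖xb‖ ≤ lam) :
    ‖L.forgetGate ua xa * xa - L.forgetGate ub xb * xb‖ ≤
      L.fBound μ lam * ‖xa - xb‖ +
        1 / 4 * (matNorm L.Wf * ‖ua - ub‖ + matNorm L.Uf * ‖xa - xb‖) * lam :=
  norm_mul_sub_mul_le (sigmoid_mem_Ioo _).1.le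
    (by have := matNorm_nonneg L.Wf; have := matNorm_nonneg L.Uf; positivity)
    (fun i => by
      rw [abs_of_nonneg (L.forgetGate_mem_Icc ua xa i).1]
      exact sigmoid_affine_apply_le_sigmoid_catNorm _ _ _ hua hxa i)
    (abs_sigmoid_affine_apply_sub_le _ _ _ ua ub xa xb) hxb

theorem abs_candidate_sub_le (hua : ‖ua‖ ≤ μ) (hxa : ‖xa‖ ≤ lam) (hxb : ‖xb‖ ≤ lam)
    (j : Fin nx) :
    |L.candidate ua xa j - L.candidate ub xb j| ≤
      L.candidateStateLip μ lam * ‖xa - xb‖ + L.candidateInputLip lam * ‖ua - ub‖ := by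
  have := matNorm_nonneg L.Ur
  grw [candidate, candidate, abs_tanh_sub_le, abs_affine_apply_sub_le,
    L.norm_forgetGate_mul_sub_le hua hxa hxb]
  exact le_of_eq (by unfold candidateStateLip candidateInputLip; ring)

theorem abs_candidate_le (hu : ‖ub‖ ≤ μ) (hx : ‖xb‖ ≤ lam) (j : Fin nx) :
    |L.candidate ub xb j| ≤ L.rBound μ lam := by
  have hfx : ‖L.forgetGate ub xb * xb‖ ≤ lam := by
    refine (pi_norm_le_iff_of_nonneg ((norm_nonneg xb).trans hx)).2 fun i => ?_
    obtain ⟨hf0, hf1⟩ := L.forgetGate_mem_Icc ub xb i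
    rw [Pi.mul_apply, norm_mul, Real.norm_eq_abs (L.forgetGate ub xb i), abs_of_nonneg hf0]
    exact (mul_le_of_le_one_left (norm_nonneg _) hf1).trans ((norm_le_pi_norm xb i).trans hx)
  exact abs_tanh_le_tanh (abs_affine_apply_le_catNorm _ _ _ hu hfx j)

theorem norm_step_sub_le (hua : ‖ua‖ ≤ μ) (hub : ‖ub‖ ≤ μ) (hxa : ‖xa‖ ≤ lam)
    (hxb : ‖xb‖ ≤ lam) (hE : L.candidateStateLip μ lam ≤ 1) :
    ‖L.step ua xa - L.step ub xb‖ ≤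
      L.contraction μ lam * ‖xa - xb‖ + L.inputGain μ lam * ‖ua - ub‖ := by
  have hlam : 0 ≤ lam := (norm_nonneg xa).trans hxa
  have := L.contraction_nonneg (μ := μ) hlam
  have := L.inputGain_nonneg (μ := μ) hlam
  refine (pi_norm_le_iff_of_nonneg (by positivity)).2 fun j => ?_
  obtain ⟨hz0, hz1⟩ := L.updateGate_mem_Icc ua xa j
  have hz : L.updateGate ua xa j ≤ L.zBound μ lam :=
    sigmoid_affine_apply_le_sigmoid_catNorm _ _ _ hua hxa j
  have hdz : |L.updateGate ua xa j - L.updateGate ub xb j| ≤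
      1 / 4 * (matNorm L.Wz * ‖ua - ub‖ + matNorm L.Uz * ‖xa - xb‖) :=
    abs_sigmoid_affine_apply_sub_le _ _ _ ua ub xa xb j
  have hdx : |xa j - xb j| ≤ ‖xa - xb‖ := norm_le_pi_norm (xa - xb) j
  have hxbj : |xb j| ≤ lam := (norm_le_pi_norm xb j).trans hxb
  have hdr := L.abs_candidate_sub_le (ub := ub) hua hxa hxb j
  have hrb := L.abs_candidate_le hub hxb j
  have := sub_nonneg.2 hz1
  have := matNorm_nonneg L.Wz
  have := matNorm_nonneg L.Uz
  rw [Real.norm_eq_abs, Pi.sub_apply, step_apply, step_apply]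
  grw [abs_convex_comb_sub_le hz0 hz1, hdx, hdr, hdz, hxbj, hrb]
  -- `z ↦ z + (1 - z) * candidateStateLip` is monotone as `candidateStateLip ≤ 1`, so the
  -- update gate may be replaced by its bound `zBound`
  have hmono : 0 ≤ (L.zBound μ lam - L.updateGate ua xa j) * (1 - L.candidateStateLip μ lam) *
      ‖xa - xb‖ := by
    have := sub_nonneg.2 hz
    have := sub_nonneg.2 hE
    positivity
  have hgain : 0 ≤ L.updateGate ua xa j * (L.candidateInputLip lam * ‖ua - ub‖) :=
    mul_nonneg hz0 (mul_nonneg (L.candidateInputLip_nonneg hlam) (norm_nonneg _))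
  unfold contraction inputGain
  linarith

variable {L}

theorem DeltaISSCondition.candidateStateLip_le_one (h : L.DeltaISSCondition μ lam)
    (hlam : 0 ≤ lam) : L.candidateStateLip μ lam ≤ 1 := by
  have := sub_pos.2 (sigmoid_mem_Ioo (catNorm (μ • L.Wz) (lam • L.Uz) L.bz)).2
  have := L.rBound_nonneg μ lam
  have := matNorm_nonneg L.Uz
  have : 0 ≤ 1 / 4 * ((lam + L.rBound μ lam) / (1 - L.zBound μ lam)) * matNorm L.Uz := by
    unfold zBound
    positivity
  exact h.le.trans (by linarith)

theorem DeltaISSCondition.contraction_lt_one (h : L.DeltaISSCondition μ lam) :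
    L.contraction μ lam < 1 := by
  have hz : 0 < 1 - L.zBound μ lam := sub_pos.2 (sigmoid_mem_Ioo _).2
  have hcancel : (1 - L.zBound μ lam) *
      (1 / 4 * ((lam + L.rBound μ lam) / (1 - L.zBound μ lam))) =
      1 / 4 * (lam + L.rBound μ lam) := by
    field_simp
  have := mul_lt_mul_of_pos_left h hz
  rw [mul_sub, mul_one, ← mul_assoc, hcancel] at this
  unfold contraction
  linarith

end GRULayer

theorem isKInf_const_mul {C : ℝ} (hC : 0 < C) : IsKInf fun s => C * s := by
  refine ⟨(continuous_const_mul C).continuousOn, fun s _ t _ hst => mul_lt_mul_of_pos_left hst hC,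
    mul_zero C, fun M => ⟨|M| / C + 1, by positivity, ?_⟩⟩
  show M < C * (|M| / C + 1)
  rw [mul_add, mul_div_cancel₀ _ hC.ne', mul_one]
  linarith [le_abs_self M]

theorem isKL_mul_pow_mul {C r : ℝ} (hC : 0 < C) (hr0 : 0 < r) (hr1 : r < 1) :
    IsKL fun s k => C * r ^ k * s :=
  ⟨fun _ => isKInf_const_mul (by positivity),
    fun _ hs _ _ hkl => mul_le_mul_of_nonneg_right
      (mul_le_mul_of_nonneg_left (pow_le_pow_of_le_one hr0.le hr1.le hkl) hC.le) hs,
    fun s _ => by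
      simpa using ((tendsto_pow_atTop_nhds_zero_of_lt_one hr0.le hr1).const_mul C).mul_const s⟩

open Topology in
theorem exists_rate_and_gain {M : ℕ} {a b : ℕ → ℝ} (ha : ∀ i < M, 0 ≤ a i ∧ a i < 1)
    (hb : ∀ i < M, 0 ≤ b i) :
    ∃ r c : ℝ, 0 < r ∧ r < 1 ∧ 0 ≤ c ∧
      ∀ i < M, (0 ≤ a i ∧ a i ≤ r) ∧ (0 ≤ b i ∧ b i ≤ c * (r - a i)) := by
  have hev : ∀ᶠ r in 𝓝[<] (1 : ℝ), 0 < r ∧ ∀ i ∈ Set.Iio M, a i < r :=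
    ((eventually_gt_nhds one_pos).and ((Set.finite_Iio M).eventually_all.2
      fun i hi => eventually_gt_nhds (ha i hi).2)).filter_mono nhdsWithin_le_nhds
  obtain ⟨r, ⟨hr0, har⟩, hr1⟩ := (hev.and self_mem_nhdsWithin).exists
  have hterm : ∀ i < M, 0 ≤ b i / (r - a i) := fun i hi =>
    div_nonneg (hb i hi) (sub_pos.2 (har i hi)).le
  refine ⟨r, ∑ i ∈ Finset.range M, b i / (r - a i), hr0, hr1,
    Finset.sum_nonneg fun i hi => hterm i (Finset.mem_range.1 hi), fun i hi =>
      ⟨⟨(ha i hi).1, (har i hi).le⟩, hb i hi, (div_le_iff₀ (sub_pos.2 (har i hi))).1 ?_⟩⟩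
  exact Finset.single_le_sum (fun j hj => hterm j (Finset.mem_range.1 hj)) (Finset.mem_range.2 hi)

theorem le_geometric_of_linear_recursion {a b r c C S D : ℝ} {d g : ℕ → ℝ} (ha : 0 ≤ a)
    (har : a ≤ r) (hr : r ≤ 1) (hb : 0 ≤ b) (hbc : b ≤ c * (r - a)) (hc : 0 ≤ c) (hC : 1 ≤ C)
    (hS : 0 ≤ S) (hD : 0 ≤ D) (hd0 : d 0 ≤ S) (hg : ∀ k, g k ≤ C * (r ^ (k + 1) * S + D))
    (hd : ∀ k, d (k + 1) ≤ a * d k + b * g k) (k : ℕ) :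
    d k ≤ (1 + c) * C * (r ^ k * S + D) := by
  have hr0 : 0 ≤ r := ha.trans har
  induction k with
  | zero =>
    have hCc : S + D ≤ (1 + c) * C * (S + D) :=
      le_mul_of_one_le_left (by positivity) (one_le_mul_of_one_le_of_one_le (by linarith) hC)
    rw [pow_zero, one_mul]
    linarith
  | succ k ih =>
    have hS_coef : (1 + c) * a + b * r ≤ (1 + c) * r := by nlinarith
    have hD_coef : (1 + c) * a + b ≤ 1 + c := by nlinarith
    calc d (k + 1) ≤ a * ((1 + c) * C * (r ^ k * S + D)) + b * (C * (r ^ (k + 1) * S + D)) := by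
          grw [hd k, ih, hg k]
      _ = C * (r ^ k * S) * ((1 + c) * a + b * r) + C * D * ((1 + c) * a + b) := by ring
      _ ≤ C * (r ^ k * S) * ((1 + c) * r) + C * D * (1 + c) := by
          have := pow_nonneg hr0 k
          gcongr
      _ = (1 + c) * C * (r ^ (k + 1) * S + D) := by ring

theorem cascade_le_geometric {M : ℕ} {a b e : ℕ → ℝ} {d : ℕ → ℕ → ℝ} {r c S D : ℝ} (hr : r ≤ 1)
    (hc : 0 ≤ c) (ha : ∀ i < M, 0 ≤ a i ∧ a i ≤ r) (hb : ∀ i < M, 0 ≤ b i ∧ b i ≤ c * (r - a i))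
    (hS : 0 ≤ S) (hD : 0 ≤ D) (he : ∀ k, e k ≤ D) (hd0 : ∀ i < M, d i 0 ≤ S)
    (hfirst : 0 < M → ∀ k, d 0 (k + 1) ≤ a 0 * d 0 k + b 0 * e k)
    (hnext : ∀ i, i + 1 < M → ∀ k,
      d (i + 1) (k + 1) ≤ a (i + 1) * d (i + 1) k + b (i + 1) * d i (k + 1)) :
    ∀ i < M, ∀ k, d i k ≤ (1 + c) ^ (i + 1) * (r ^ k * S + D) := by
  intro i
  induction i with
  | zero =>
    intro hM k
    have hg : ∀ k, e k ≤ 1 * (r ^ (k + 1) * S + D) := fun k => by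
      have := pow_nonneg ((ha 0 hM).1.trans (ha 0 hM).2) (k + 1)
      nlinarith [he k]
    simpa using le_geometric_of_linear_recursion (ha 0 hM).1 (ha 0 hM).2 hr (hb 0 hM).1
      (hb 0 hM).2 hc le_rfl hS hD (hd0 0 hM) hg (hfirst hM) k
  | succ i ih =>
    intro hi k
    have hC : 1 ≤ (1 + c) ^ (i + 1) := one_le_pow₀ (by linarith)
    refine (le_geometric_of_linear_recursion (ha _ hi).1 (ha _ hi).2 hr (hb _ hi).1 (hb _ hi).2
      hc hC hS hD (hd0 _ hi) (fun k => ih (by omega) (k + 1)) (hnext i hi) k).trans_eq ?_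
    ring

theorem norm_sub_le_iSup_norm_sub {ι E : Type*} [SeminormedAddCommGroup E] {u v : ι → E}
    {C : ℝ} (hu : ∀ t, ‖u t‖ ≤ C) (hv : ∀ t, ‖v t‖ ≤ C) (t : ι) :
    ‖u t - v t‖ ≤ ⨆ s, ‖u s - v s‖ :=
  le_ciSup ⟨C + C, by
    rintro _ ⟨s, rfl⟩
    exact (norm_sub_le _ _).trans (add_le_add (hu s) (hv s))⟩ t

def layerInput {nu : ℕ} {n : ℕ → ℕ} (u : Fin nu → ℝ) (x : ∀ i, Fin (n i) → ℝ) :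
    ∀ i, Fin (inDim nu n i) → ℝ
  | 0 => u
  | i + 1 => x i

theorem norm_layerInput_le {nu M : ℕ} {n : ℕ → ℕ} {lam : ℕ → ℝ} {u : Fin nu → ℝ}
    {x : ∀ i, Fin (n i) → ℝ} (hu : ‖u‖ ≤ 1) (hx : ∀ i < M, ‖x i‖ ≤ lam i) {i : ℕ} (hi : i < M) :
    ‖layerInput u x i‖ ≤ lamIn lam i := by
  cases i with
  | zero => exact hu
  | succ i => exact hx i (by omega)

def IsDeepGRUTrajectory {nu : ℕ} {n : ℕ → ℕ} (L : ∀ i, GRULayer (inDim nu n i) (n i)) (M : ℕ)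
    (u : ℕ → Fin nu → ℝ) (x : ℕ → ∀ i, Fin (n i) → ℝ) : Prop :=
  ∀ k, ∀ i < M, x (k + 1) i = (L i).step (layerInput (u k) (x (k + 1)) i) (x k i)

namespace IsDeepGRUTrajectory

variable {nu M : ℕ} {n : ℕ → ℕ} {L : ∀ i, GRULayer (inDim nu n i) (n i)} {lam : ℕ → ℝ}

theorem of_forall {u : ℕ → Fin nu → ℝ} {x : ℕ → ∀ i, Fin (n i) → ℝ}
    (h0 : ∀ k, 0 < M → x (k + 1) 0 = (L 0).step (u k) (x k 0))
    (hsucc : ∀ k, ∀ i, i + 1 < M →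
      x (k + 1) (i + 1) = (L (i + 1)).step (x (k + 1) i) (x k (i + 1))) :
    IsDeepGRUTrajectory L M u x := by
  rintro k (_ | i) hi
  exacts [h0 k hi, hsucc k i hi]

theorem norm_le {u : ℕ → Fin nu → ℝ} {x : ℕ → ∀ i, Fin (n i) → ℝ}
    (h : IsDeepGRUTrajectory L M u x) (hlam : ∀ i < M, 1 ≤ lam i)
    (h0 : ∀ i < M, ‖x 0 i‖ ≤ lam i) : ∀ k, ∀ i < M, ‖x k i‖ ≤ lam i
  | 0 => h0
  | k + 1 => fun i hi => by
    rw [h k i hi]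
    exact (L i).norm_step_le (hlam i hi) _ (h.norm_le hlam h0 k i hi)

theorem norm_sub_le {ua ub : ℕ → Fin nu → ℝ} {xa xb : ℕ → ∀ i, Fin (n i) → ℝ}
    (ha : IsDeepGRUTrajectory L M ua xa) (hb : IsDeepGRUTrajectory L M ub xb)
    (hua : ∀ t, ‖ua t‖ ≤ 1) (hub : ∀ t, ‖ub t‖ ≤ 1) (hxa : ∀ k, ∀ i < M, ‖xa k i‖ ≤ lam i)
    (hxb : ∀ k, ∀ i < M, ‖xb k i‖ ≤ lam i)
    (hE : ∀ i < M, (L i).candidateStateLip (lamIn lam i) (lam i) ≤ 1) (k : ℕ) {i : ℕ}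
    (hi : i < M) :
    ‖xa (k + 1) i - xb (k + 1) i‖ ≤
      (L i).contraction (lamIn lam i) (lam i) * ‖xa k i - xb k i‖ +
        (L i).inputGain (lamIn lam i) (lam i) *
          ‖layerInput (ua k) (xa (k + 1)) i - layerInput (ub k) (xb (k + 1)) i‖ := by
  rw [ha k i hi, hb k i hi]
  exact (L i).norm_step_sub_le (norm_layerInput_le (hua k) (hxa (k + 1)) hi)
    (norm_layerInput_le (hub k) (hxb (k + 1)) hi) (hxa k i hi) (hxb k i hi) (hE i hi)

theorem norm_sub_le_geometric {ua ub : ℕ → Fin nu → ℝ} {xa xb : ℕ → ∀ i, Fin (n i) → ℝ}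
    (ha : IsDeepGRUTrajectory L M ua xa) (hb : IsDeepGRUTrajectory L M ub xb)
    (hua : ∀ t, ‖ua t‖ ≤ 1) (hub : ∀ t, ‖ub t‖ ≤ 1) (hlam : ∀ i < M, 1 ≤ lam i)
    (hxa0 : ∀ i < M, ‖xa 0 i‖ ≤ lam i) (hxb0 : ∀ i < M, ‖xb 0 i‖ ≤ lam i)
    (hE : ∀ i < M, (L i).candidateStateLip (lamIn lam i) (lam i) ≤ 1) {r c : ℝ} (hr : r ≤ 1)
    (hc : 0 ≤ c)
    (hcoef : ∀ i < M,
      (0 ≤ (L i).contraction (lamIn lam i) (lam i) ∧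
        (L i).contraction (lamIn lam i) (lam i) ≤ r) ∧
      (0 ≤ (L i).inputGain (lamIn lam i) (lam i) ∧
        (L i).inputGain (lamIn lam i) (lam i) ≤
          c * (r - (L i).contraction (lamIn lam i) (lam i)))) :
    ∀ i < M, ∀ k, ‖xa k i - xb k i‖ ≤
      (1 + c) ^ (i + 1) * (r ^ k * (⨆ j : Fin M, ‖xa 0 j - xb 0 j‖) + ⨆ t, ‖ua t - ub t‖) := by
  have hstep := ha.norm_sub_le hb hua hub (ha.norm_le hlam hxa0) (hb.norm_le hlam hxb0) hE
  exact cascade_le_geometric (d := fun i k => ‖xa k i - xb k i‖) (e := fun t => ‖ua t - ub t‖)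
    hr hc (fun i hi => (hcoef i hi).1) (fun i hi => (hcoef i hi).2)
    (Real.iSup_nonneg fun _ => norm_nonneg _) (Real.iSup_nonneg fun _ => norm_nonneg _)
    (norm_sub_le_iSup_norm_sub hua hub)
    (fun i hi => le_ciSup (f := fun j : Fin M => ‖xa 0 j - xb 0 j‖)
      (Set.finite_range _).bddAbove ⟨i, hi⟩)
    (fun hM k => hstep k hM) (fun i hi k => hstep k hi)

end IsDeepGRUTrajectory

/-- **Proposition 3 (δISS of deep GRUs).**
With `σ̌_z^i = σ(‖[λ̌^{i-1}W_z^i λ̌^iU_z^i b_z^i]‖_∞)`,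
`σ̌_f^i = σ(‖[λ̌^{i-1}W_f^i λ̌^iU_f^i b_f^i]‖_∞)`,
`φ̌_r^i = tanh(‖[λ̌^{i-1}W_r^i λ̌^iU_r^i b_r^i]‖_∞)`, if for every layer
`‖U_r^i‖_∞ ((1/4) λ̌^i ‖U_f^i‖_∞ + σ̌_f^i) < 1 - (1/4) ((λ̌^i + φ̌_r^i)/(1 - σ̌_z^i)) ‖U_z^i‖_∞`
then the deep GRU is Incrementally Input-to-State Stable. -/
theorem deep_gru_deltaISS {nu M : ℕ} {n : ℕ → ℕ}
    (Wz Wf Wr : ∀ i : ℕ, Matrix (Fin (n i)) (Fin (inDim nu n i)) ℝ)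
    (Uz Uf Ur : ∀ i : ℕ, Matrix (Fin (n i)) (Fin (n i)) ℝ)
    (bz bf br : ∀ i : ℕ, Fin (n i) → ℝ)
    (lam : ℕ → ℝ) (hlam : ∀ i < M, 1 ≤ lam i)
    (hcond : ∀ i < M,
      matNorm (Ur i) * ((1 / 4) * lam i * matNorm (Uf i) +
          _root_.sigmoid (catNorm (lamIn lam i • Wf i) (lam i • Uf i) (bf i))) <
        1 - (1 / 4) *
          ((lam i + Real.tanh (catNorm (lamIn lam i • Wr i) (lam i • Ur i) (br i))) /
            (1 - _root_.sigmoid (catNorm (lamIn lam i • Wz i) (lam i • Uz i) (bz i)))) *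
          matNorm (Uz i)) :
    ∃ β : ℝ → ℕ → ℝ, ∃ γu : ℝ → ℝ, IsKL β ∧ IsKInf γu ∧
      ∀ xbara xbarb : ∀ i : ℕ, Fin (n i) → ℝ,
        (∀ i < M, ‖xbara i‖ ≤ lam i) → (∀ i < M, ‖xbarb i‖ ≤ lam i) →
        ∀ ua ub : ℕ → Fin nu → ℝ, (∀ t, ‖ua t‖ ≤ 1) → (∀ t, ‖ub t‖ ≤ 1) →
          ∀ xa xb : ℕ → ∀ i : ℕ, Fin (n i) → ℝ, xa 0 = xbara → xb 0 = xbarb →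
            (∀ k, 0 < M → xa (k + 1) 0 =
              gruStep (Wz 0) (Wf 0) (Wr 0) (Uz 0) (Uf 0) (Ur 0) (bz 0) (bf 0) (br 0)
                (ua k) (xa k 0)) →
            (∀ k, ∀ i : ℕ, i + 1 < M → xa (k + 1) (i + 1) =
              gruStep (Wz (i + 1)) (Wf (i + 1)) (Wr (i + 1)) (Uz (i + 1)) (Uf (i + 1))
                (Ur (i + 1)) (bz (i + 1)) (bf (i + 1)) (br (i + 1))
                (xa (k + 1) i) (xa k (i + 1))) →
            (∀ k, 0 < M → xb (k + 1) 0 =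
              gruStep (Wz 0) (Wf 0) (Wr 0) (Uz 0) (Uf 0) (Ur 0) (bz 0) (bf 0) (br 0)
                (ub k) (xb k 0)) →
            (∀ k, ∀ i : ℕ, i + 1 < M → xb (k + 1) (i + 1) =
              gruStep (Wz (i + 1)) (Wf (i + 1)) (Wr (i + 1)) (Uz (i + 1)) (Uf (i + 1))
                (Ur (i + 1)) (bz (i + 1)) (bf (i + 1)) (br (i + 1))
                (xb (k + 1) i) (xb k (i + 1))) →
              ∀ k : ℕ, (⨆ i : Fin M, ‖xa k (i : ℕ) - xb k (i : ℕ)‖) ≤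
                β (⨆ i : Fin M, ‖xbara (i : ℕ) - xbarb (i : ℕ)‖) k +
                  γu (⨆ t, ‖ua t - ub t‖) := by
  set L : ∀ i, GRULayer (inDim nu n i) (n i) := fun i =>
    ⟨Wz i, Wf i, Wr i, Uz i, Uf i, Ur i, bz i, bf i, br i⟩
  have hL : ∀ i < M, (L i).DeltaISSCondition (lamIn lam i) (lam i) := hcond
  have hlam0 : ∀ i < M, 0 ≤ lam i := fun i hi => zero_le_one.trans (hlam i hi)
  obtain ⟨r, c, hr0, hr1, hc, hcoef⟩ := exists_rate_and_gain
    (a := fun i => (L i).contraction (lamIn lam i) (lam i))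
    (b := fun i => (L i).inputGain (lamIn lam i) (lam i))
    (fun i hi => ⟨(L i).contraction_nonneg (hlam0 i hi), (hL i hi).contraction_lt_one⟩)
    (fun i hi => (L i).inputGain_nonneg (hlam0 i hi))
  refine ⟨fun s k => (1 + c) ^ M * r ^ k * s, fun s => (1 + c) ^ M * s,
    isKL_mul_pow_mul (by positivity) hr0 hr1, isKInf_const_mul (by positivity), ?_⟩
  intro xbara xbarb hxa0 hxb0 ua ub hua hub xa xb hxa hxb ha0 haS hb0 hbS k
  subst hxa hxb
  have ha := IsDeepGRUTrajectory.of_forall (L := L) ha0 haS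
  have hb := IsDeepGRUTrajectory.of_forall (L := L) hb0 hbS
  have hbound := ha.norm_sub_le_geometric hb hua hub hlam hxa0 hxb0
    (fun i hi => (hL i hi).candidateStateLip_le_one (hlam0 i hi)) hr1.le hc hcoef
  have hS : 0 ≤ ⨆ i : Fin M, ‖xa 0 i - xb 0 i‖ := Real.iSup_nonneg fun _ => norm_nonneg _
  have hD : 0 ≤ ⨆ t, ‖ua t - ub t‖ := Real.iSup_nonneg fun _ => norm_nonneg _
  refine Real.iSup_le (fun i => (hbound i i.2 k).trans ?_) (by positivity)
  dsimp only
  rw [mul_assoc, ← mul_add]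
  exact mul_le_mul_of_nonneg_right (pow_le_pow_right₀ (by linarith) i.2) (by positivity)
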